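/- arXiv:2208.09794 — 6 statements merged into one kernel-verified Lean document; each statement's English description precedes it below -/
import Mathlib

section
/- If λ ∈ 𝒫_p and λ₁ ≥ λ_i for all i ∈ {1,…,n} (λ₁ is the largest entry), then λ₁·F^{11}(λ) ≥ (binom(n,p)/n)·F(λ). (This is item (1) of Lemma 2.2 in the equivalent form without fractional powers: with F̃ = F^{1/binom(n,p)}, it says F̃^{11}(λ)·λ₁ ≥ F̃(λ)/n.) -/
open Finset

/-- `F(λ) = ∏_{|I|=p} Σ_{i∈I} λ_i`, the product over all `p`-element subsets of `{1,…,n}`. -/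
noncomputable def Fval (n p : ℕ) (lam : Fin n → ℝ) : ℝ :=
  ∏ I ∈ Finset.powersetCard p (Finset.univ : Finset (Fin n)), ∑ i ∈ I, lam i

/-- `F^{kk}(λ) = ∂F/∂λ_k = Σ_{|I|=p, k∈I} ∏_{|J|=p, J≠I} Σ_{i∈J} λ_i`. -/
noncomputable def Fkk (n p : ℕ) (k : Fin n) (lam : Fin n → ℝ) : ℝ :=
  ∑ I ∈ (Finset.powersetCard p (Finset.univ : Finset (Fin n))).filter (fun I => k ∈ I),
    ∏ J ∈ (Finset.powersetCard p (Finset.univ : Finset (Fin n))).erase I, ∑ i ∈ J, lam i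

/-- The Gårding cone `𝒫_p`: all sums of `p` of the entries are positive. -/
def Pcone (n p : ℕ) (lam : Fin n → ℝ) : Prop :=
  ∀ I ∈ Finset.powersetCard p (Finset.univ : Finset (Fin n)), 0 < ∑ i ∈ I, lam i

/- For each `p`-subset `I ∋ 1`, factoring `S_I` out of `F` and bounding `S_I ≤ p λ₁` gives
`F ≤ p λ₁ ∏_{J ≠ I} S_J`; the product is nonnegative because `λ` lies in the cone. Summing over the
`binom(n-1, p-1)` such `I` yields `binom(n-1, p-1) F ≤ p λ₁ F^{11}`, and
`n binom(n-1, p-1) = p binom(n, p)`. -/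

theorem Finset.card_filter_mem_powersetCard {α : Type*} [DecidableEq α] {t : Finset α}
    {a : α} (ha : a ∈ t) {p : ℕ} (hp : 1 ≤ p) :
    #((t.powersetCard p).filter (a ∈ ·)) = (#t - 1).choose (p - 1) := by
  simpa [singleton_subset_iff] using
    card_filter_powersetCard_subset {a} t p (singleton_subset_iff.mpr ha) (by simpa using hp)

theorem Nat.mul_choose_pred_pred {n p : ℕ} (hn : 1 ≤ n) (hp : 1 ≤ p) :
    n * (n - 1).choose (p - 1) = n.choose p * p := by
  simpa [Nat.sub_add_cancel hn, Nat.sub_add_cancel hp] using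
    Nat.add_one_mul_choose_eq (n - 1) (p - 1)

section

variable {n p : ℕ} {lam : Fin n → ℝ} {k : Fin n}

theorem Fval_le_mul_prod_erase (hP : Pcone n p lam) (hmax : ∀ i, lam i ≤ lam k)
    {I : Finset (Fin n)} (hI : I ∈ powersetCard p univ) :
    Fval n p lam ≤ p * (lam k * ∏ J ∈ (powersetCard p univ).erase I, ∑ i ∈ J, lam i) := by
  have hS : ∑ i ∈ I, lam i ≤ p * lam k := by
    simpa [(mem_powersetCard.mp hI).2] using sum_le_card_nsmul I lam (lam k) fun i _ => hmax i
  have hrest : 0 ≤ ∏ J ∈ (powersetCard p univ).erase I, ∑ i ∈ J, lam i :=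
    prod_nonneg fun J hJ => (hP J (mem_of_mem_erase hJ)).le
  rw [Fval, ← mul_prod_erase _ _ hI, ← mul_assoc]
  exact mul_le_mul_of_nonneg_right hS hrest

theorem choose_mul_Fval_le (hp : 1 ≤ p) (hP : Pcone n p lam) (hmax : ∀ i, lam i ≤ lam k) :
    ((n - 1).choose (p - 1) : ℝ) * Fval n p lam ≤ p * (lam k * Fkk n p k lam) := by
  have hcard := card_filter_mem_powersetCard (mem_univ k) hp
  rw [card_univ, Fintype.card_fin] at hcard
  calc ((n - 1).choose (p - 1) : ℝ) * Fval n p lam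
      = ∑ _I ∈ (powersetCard p univ).filter (k ∈ ·), Fval n p lam := by
        rw [sum_const, hcard, nsmul_eq_mul]
    _ ≤ ∑ I ∈ (powersetCard p univ).filter (k ∈ ·),
          p * (lam k * ∏ J ∈ (powersetCard p univ).erase I, ∑ i ∈ J, lam i) :=
        sum_le_sum fun I hI => Fval_le_mul_prod_erase hP hmax (mem_filter.mp hI).1
    _ = p * (lam k * Fkk n p k lam) := by rw [Fkk, ← mul_sum, ← mul_sum]

end

theorem lemma22_item1_general (n p : ℕ) (hn : 0 < n) (hp1 : 1 ≤ p)
    (lam : Fin n → ℝ) (hP : Pcone n p lam)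
    (hmax : ∀ i, lam i ≤ lam ⟨0, hn⟩) :
    ((n.choose p : ℝ) / n) * Fval n p lam ≤ lam ⟨0, hn⟩ * Fkk n p ⟨0, hn⟩ lam := by
  have hchoose : (n : ℝ) * (n - 1).choose (p - 1) = n.choose p * p := by
    exact_mod_cast Nat.mul_choose_pred_pred hn hp1
  have hn_pos : (0 : ℝ) < n := by exact_mod_cast hn
  have hp_pos : (0 : ℝ) < p := by exact_mod_cast hp1
  rw [div_mul_eq_mul_div, div_le_iff₀ hn_pos]
  refine le_of_mul_le_mul_left ?_ hp_pos
  calc (p : ℝ) * (n.choose p * Fval n p lam)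
      = n * ((n - 1).choose (p - 1) * Fval n p lam) := by
        linear_combination -Fval n p lam * hchoose
    _ ≤ n * (p * (lam ⟨0, hn⟩ * Fkk n p ⟨0, hn⟩ lam)) :=
        mul_le_mul_of_nonneg_left (choose_mul_Fval_le hp1 hP hmax) hn_pos.le
    _ = p * (lam ⟨0, hn⟩ * Fkk n p ⟨0, hn⟩ lam * n) := by ring

/-- Lemma 2.2 (1): if `λ₁` is the largest entry, then `λ₁·F^{11}(λ) ≥ (C(n,p)/n)·F(λ)`. -/
theorem lemma22_item1 (n p : ℕ) (hn : 0 < n) (hp1 : 1 ≤ p) (hpn : p ≤ n)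
    (lam : Fin n → ℝ) (hP : Pcone n p lam)
    (hmax : ∀ i, lam i ≤ lam ⟨0, hn⟩) :
    ((n.choose p : ℝ) / n) * Fval n p lam ≤ lam ⟨0, hn⟩ * Fkk n p ⟨0, hn⟩ lam :=
  lemma22_item1_general n p hn hp1 lam hP hmax
end

section
/- If λ ∈ 𝒫_p, then Σ_{k=1}^n F^{kk}(λ) ≥ p·N·F(λ)^{(N−1)/N}, where N = binom(n,p) and the power is the real power of the positive number F(λ). (This is item (2) of Lemma 2.2: with F̃ = F^{1/N}, it says Σ_k F̃^{kk}(λ) ≥ p.) -/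
open Finset

/-!
Write `F = ∏_{|J|=p} S_J` and `a_I = ∏_{J ≠ I} S_J = ∂F/∂S_I`. Each `λ_k` occurs in exactly the
`S_I` with `k ∈ I`, and each `I` contains `p` indices, so `Σ_k F^{kk} = p Σ_I a_I`. The `N` numbers
`a_I` have product `F^{N-1}`, since every factor `S_J` is omitted exactly once, so AM-GM gives
`Σ_I a_I ≥ N F^{(N-1)/N}`.
-/

theorem Finset.prod_prod_erase {ι M : Type*} [DecidableEq ι] [CommMonoid M]
    (s : Finset ι) (f : ι → M) :
    ∏ i ∈ s, ∏ j ∈ s.erase i, f j = (∏ j ∈ s, f j) ^ (#s - 1) := by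
  have hcofactor : ∀ i ∈ s, ∏ j ∈ s.erase i, f j = ∏ j ∈ s, if i = j then 1 else f j := by
    intro i _
    rw [prod_ite, prod_const_one, one_mul, filter_ne]
  rw [prod_congr rfl hcofactor, prod_comm, ← prod_pow]
  refine prod_congr rfl fun j hj => ?_
  rw [prod_ite, prod_const_one, one_mul, filter_ne', prod_const, card_erase_of_mem hj]

theorem Finset.sum_sum_filter_mem {α R : Type*} [Fintype α] [DecidableEq α] [NonAssocSemiring R]
    (s : Finset (Finset α)) (f : Finset α → R) :
    ∑ k, ∑ I ∈ s with k ∈ I, f I = ∑ I ∈ s, #I * f I := by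
  simp_rw [sum_filter]
  rw [sum_comm]
  refine sum_congr rfl fun I _ => ?_
  rw [sum_ite_mem, univ_inter, sum_const, nsmul_eq_mul]

theorem Real.card_mul_prod_rpow_le_sum_prod_erase {ι : Type*} [DecidableEq ι] (s : Finset ι)
    {x : ι → ℝ} (hx : ∀ i ∈ s, 0 ≤ x i) :
    (#s : ℝ) * (∏ i ∈ s, x i) ^ (((#s : ℝ) - 1) / #s) ≤ ∑ i ∈ s, ∏ j ∈ s.erase i, x j := by
  rcases s.eq_empty_or_nonempty with rfl | hs
  · simp
  have hN : (0 : ℝ) < #s := by exact_mod_cast hs.card_pos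
  have hF : 0 ≤ ∏ i ∈ s, x i := prod_nonneg hx
  have hcofactor : ∀ i ∈ s, 0 ≤ ∏ j ∈ s.erase i, x j :=
    fun i _ => prod_nonneg fun j hj => hx j (mem_of_mem_erase hj)
  have amgm := Real.geom_mean_le_arith_mean s (fun _ => 1) _ (fun _ _ => zero_le_one)
    (by simpa using hN) hcofactor
  simp only [Real.rpow_one, sum_const, nsmul_eq_mul, mul_one, one_mul] at amgm
  rw [prod_prod_erase, ← Real.rpow_natCast, ← Real.rpow_mul hF, Nat.cast_pred hs.card_pos,
    ← div_eq_mul_inv, le_div_iff₀ hN] at amgm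
  rwa [mul_comm]

theorem lemma22_item2_general (n p : ℕ)
    (lam : Fin n → ℝ) (hP : Pcone n p lam) :
    (p : ℝ) * (n.choose p : ℝ) *
        (Fval n p lam) ^ (((n.choose p : ℝ) - 1) / (n.choose p : ℝ)) ≤
      ∑ k : Fin n, Fkk n p k lam := by
  set S := powersetCard p (univ : Finset (Fin n))
  have hcard : #S = n.choose p := by simp [S]
  have hsum : ∑ k, Fkk n p k lam = p * ∑ I ∈ S, ∏ J ∈ S.erase I, ∑ i ∈ J, lam i := by
    unfold Fkk
    rw [sum_sum_filter_mem, mul_sum]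
    exact sum_congr rfl fun I hI => by rw [(mem_powersetCard.mp hI).2]
  rw [hsum, mul_assoc, ← hcard]
  gcongr
  exact Real.card_mul_prod_rpow_le_sum_prod_erase S fun J hJ => (hP J hJ).le

/-- Lemma 2.2 (2): `Σ_k F^{kk}(λ) ≥ p·N·F(λ)^((N−1)/N)` with `N = C(n,p)`;
equivalently, with `F̃ = F^{1/N}`, `Σ_k F̃^{kk}(λ) ≥ p`. -/
theorem lemma22_item2 (n p : ℕ) (hn : 1 ≤ n) (hp1 : 1 ≤ p) (hpn : p ≤ n)
    (lam : Fin n → ℝ) (hP : Pcone n p lam) :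
    (p : ℝ) * (n.choose p : ℝ) *
        (Fval n p lam) ^ (((n.choose p : ℝ) - 1) / (n.choose p : ℝ)) ≤
      ∑ k : Fin n, Fkk n p k lam :=
  lemma22_item2_general n p lam hP
end

section
/- There exists a constant θ > 0 depending only on n and p with the following property: for every λ ∈ 𝒫_p with λ₁ ≥ λ₂ ≥ ⋯ ≥ λₙ and every index j with j ≥ n − p + 1 (i.e., λ_j is among the p smallest entries), one has F^{jj}(λ) ≥ θ · Σ_{i=1}^n F^{ii}(λ). (This is item (4) of Lemma 2.2.) -/
open Finset

/- The summand `σ_I(λ) = ∏_{J ≠ I} S_J(λ)` of `F^{kk}` satisfies `σ_I · S_I = F`, so `σ_I` grows as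
`S_I` shrinks. If `λ_j` is among the `p` smallest entries, every `p`-set `I` contains some `i ≤ j`;
exchanging `i` for `j` gives a `p`-set `I' ∋ j` with `S_{I'} ≤ S_I`, hence
`σ_I ≤ σ_{I'} ≤ F^{jj}`. Double counting gives `Σ_i F^{ii} = p Σ_I σ_I ≤ p · C(n,p) · F^{jj}`,
so `θ = 1 / (p · C(n,p))` works. -/

theorem Finset.sum_sum_filter_mem_of_card_eq {ι M : Type*} [Fintype ι] [DecidableEq ι]
    [AddCommMonoid M] {s : Finset (Finset ι)} {p : ℕ} (hs : ∀ I ∈ s, #I = p)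
    (f : Finset ι → M) :
    ∑ i, ∑ I ∈ s with i ∈ I, f I = p • ∑ I ∈ s, f I := by
  simp_rw [sum_filter]
  rw [sum_comm, smul_sum]
  refine sum_congr rfl fun I hI => ?_
  rw [sum_ite_mem, univ_inter, sum_const, hs I hI]

theorem Finset.prod_erase_le_prod_erase {α R : Type*} [DecidableEq α] [CommRing R] [LinearOrder R]
    [IsStrictOrderedRing R] {s : Finset α} {f : α → R} (hf : ∀ x ∈ s, 0 < f x) {a b : α}
    (ha : a ∈ s) (hb : b ∈ s) (hba : f b ≤ f a) :
    ∏ x ∈ s.erase a, f x ≤ ∏ x ∈ s.erase b, f x := by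
  have hprod : (∏ x ∈ s.erase a, f x) * f a = (∏ x ∈ s.erase b, f x) * f b := by
    rw [prod_erase_mul _ _ ha, prod_erase_mul _ _ hb]
  have hb_nonneg : 0 ≤ ∏ x ∈ s.erase b, f x :=
    (prod_pos fun x hx => hf x (mem_of_mem_erase hx)).le
  refine le_of_mul_le_mul_right ?_ (hf a ha)
  calc (∏ x ∈ s.erase a, f x) * f a = (∏ x ∈ s.erase b, f x) * f b := hprod
    _ ≤ (∏ x ∈ s.erase b, f x) * f a := mul_le_mul_of_nonneg_left hba hb_nonneg

theorem Fin.exists_mem_le_of_le_add_card {n : ℕ} {I : Finset (Fin n)} {j : Fin n}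
    (h : n ≤ j + #I) : ∃ i ∈ I, i ≤ j := by
  by_contra! hgt
  have := card_le_card fun i hi => mem_Ioi.2 (hgt i hi)
  rw [Fin.card_Ioi] at this
  omega

theorem Finset.insert_erase_mem_powersetCard {ι : Type*} [DecidableEq ι] {s I : Finset ι}
    {p : ℕ} {i j : ι} (hI : I ∈ powersetCard p s) (hi : i ∈ I) (hj : j ∈ s) (hjI : j ∉ I) :
    insert j (I.erase i) ∈ powersetCard p s := by
  rw [mem_powersetCard] at hI ⊢
  refine ⟨insert_subset hj ((erase_subset i I).trans hI.1), ?_⟩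
  rw [card_insert_of_notMem fun h => hjI (mem_of_mem_erase h), card_erase_of_mem hi, hI.2]
  have := card_pos.2 ⟨i, hi⟩
  omega

noncomputable def Fcofactor (n p : ℕ) (I : Finset (Fin n)) (lam : Fin n → ℝ) : ℝ :=
  ∏ J ∈ (powersetCard p (univ : Finset (Fin n))).erase I, ∑ i ∈ J, lam i

section Cofactor

variable {n p : ℕ} {lam : Fin n → ℝ}

theorem Fkk_eq_sum_Fcofactor (k : Fin n) :
    Fkk n p k lam = ∑ I ∈ powersetCard p univ with k ∈ I, Fcofactor n p I lam :=
  rfl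

theorem sum_Fkk_eq :
    ∑ i, Fkk n p i lam = p * ∑ I ∈ powersetCard p univ, Fcofactor n p I lam := by
  simp_rw [Fkk_eq_sum_Fcofactor]
  rw [sum_sum_filter_mem_of_card_eq (fun I hI => (mem_powersetCard.1 hI).2), nsmul_eq_mul]

theorem Fcofactor_pos (hlam : Pcone n p lam) (I : Finset (Fin n)) : 0 < Fcofactor n p I lam :=
  prod_pos fun J hJ => hlam J (mem_of_mem_erase hJ)

theorem Fcofactor_le_Fkk_of_mem (hlam : Pcone n p lam) {I : Finset (Fin n)}
    (hI : I ∈ powersetCard p univ) {j : Fin n} (hj : j ∈ I) :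
    Fcofactor n p I lam ≤ Fkk n p j lam :=
  single_le_sum (fun K _ => (Fcofactor_pos hlam K).le) (mem_filter.2 ⟨hI, hj⟩)

theorem Fcofactor_le_Fcofactor (hlam : Pcone n p lam) {I I' : Finset (Fin n)}
    (hI : I ∈ powersetCard p univ) (hI' : I' ∈ powersetCard p univ)
    (hS : ∑ i ∈ I', lam i ≤ ∑ i ∈ I, lam i) :
    Fcofactor n p I lam ≤ Fcofactor n p I' lam :=
  prod_erase_le_prod_erase hlam hI hI' hS

theorem Fcofactor_le_Fkk (hlam : Pcone n p lam) (hanti : Antitone lam) {I : Finset (Fin n)}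
    (hI : I ∈ powersetCard p univ) {j : Fin n} (hj : n - p ≤ (j : ℕ)) :
    Fcofactor n p I lam ≤ Fkk n p j lam := by
  by_cases hjI : j ∈ I
  · exact Fcofactor_le_Fkk_of_mem hlam hI hjI
  obtain ⟨i, hiI, hij⟩ : ∃ i ∈ I, i ≤ j :=
    Fin.exists_mem_le_of_le_add_card (by rw [(mem_powersetCard.1 hI).2]; omega)
  have hI' := insert_erase_mem_powersetCard hI hiI (mem_univ j) hjI
  have hS : ∑ k ∈ insert j (I.erase i), lam k ≤ ∑ k ∈ I, lam k := by
    rw [sum_insert fun h => hjI (mem_of_mem_erase h), ← add_sum_erase _ _ hiI]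
    exact add_le_add_left (hanti hij) _
  exact (Fcofactor_le_Fcofactor hlam hI hI' hS).trans
    (Fcofactor_le_Fkk_of_mem hlam hI' (mem_insert_self j _))

end Cofactor

/-- Indices are 0-based: `n - p ≤ j` is the paper's `j ≥ n − p + 1`. -/
theorem lemma22_item4_general (n p : ℕ) (hp1 : 1 ≤ p) (hpn : p ≤ n) :
    ∃ θ : ℝ, 0 < θ ∧
      ∀ lam : Fin n → ℝ, Pcone n p lam →
        (∀ i j : Fin n, i ≤ j → lam j ≤ lam i) →
        ∀ j : Fin n, n - p ≤ (j : ℕ) →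
          θ * ∑ i : Fin n, Fkk n p i lam ≤ Fkk n p j lam := by
  have hC : 0 < #(powersetCard p (univ : Finset (Fin n))) := by
    rw [card_powersetCard, card_univ, Fintype.card_fin]
    exact Nat.choose_pos hpn
  have hpC : (0 : ℝ) < p * #(powersetCard p (univ : Finset (Fin n))) := by positivity
  refine ⟨1 / (p * #(powersetCard p (univ : Finset (Fin n)))), by positivity, ?_⟩
  intro lam hlam hanti j hj
  have hsum : ∑ I ∈ powersetCard p univ, Fcofactor n p I lam ≤
      #(powersetCard p (univ : Finset (Fin n))) * Fkk n p j lam := by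
    rw [← nsmul_eq_mul]
    exact sum_le_card_nsmul _ _ _ fun I hI => Fcofactor_le_Fkk hlam hanti hI hj
  rw [sum_Fkk_eq, one_div, inv_mul_le_iff₀ hpC, mul_assoc]
  exact mul_le_mul_of_nonneg_left hsum (Nat.cast_nonneg p)

/-- Lemma 2.2 (4): there is `θ = θ(n,p) > 0` such that for every `λ ∈ 𝒫_p`
ordered decreasingly and every index `j` among the `p` smallest entries
(`j ≥ n − p + 1` in 1-based indexing, i.e. `n − p ≤ j` in 0-based indexing),
one has `F^{jj}(λ) ≥ θ · Σ_i F^{ii}(λ)`. -/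
theorem lemma22_item4 (n p : ℕ) (hn : 1 ≤ n) (hp1 : 1 ≤ p) (hpn : p ≤ n) :
    ∃ θ : ℝ, 0 < θ ∧
      ∀ lam : Fin n → ℝ, Pcone n p lam →
        (∀ i j : Fin n, i ≤ j → lam j ≤ lam i) →
        ∀ j : Fin n, n - p ≤ (j : ℕ) →
          θ * ∑ i : Fin n, Fkk n p i lam ≤ Fkk n p j lam :=
  lemma22_item4_general n p hp1 hpn
end

section
/- If λ ∈ 𝒫_p and k, r are indices with λ_k ≥ λ_r, then F^{kk}(λ) ≤ F^{rr}(λ). In particular, when the entries are ordered λ₁ ≥ λ₂ ≥ ⋯ ≥ λₙ one has F^{11}(λ) ≤ F^{22}(λ) ≤ ⋯ ≤ F^{nn}(λ). (This monotonicity is equivalent to the nonpositivity of the mixed second derivatives F^{kr,rk} = (F^{kk} − F^{rr})/(λ_k − λ_r) on 𝒫_p, which is used throughout the paper.) -/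
open Finset

/-!
Dividing out the positive factor `S_I`, `F^{mm}(λ) = Σ_{|I| = p, m ∈ I} F(λ) / S_I(λ)`.
The subsets containing both `k` and `r` contribute equally to `F^{kk}` and `F^{rr}`; the
exchange `I ↦ (I \ {k}) ∪ {r}` matches the remaining subsets of `F^{kk}` with those of `F^{rr}`
and lowers `S_I` by `λ_k - λ_r ≥ 0`, so it raises each term `F / S_I`.
-/

section Exchange

variable {α : Type*} [DecidableEq α]

theorem sum_insert_erase_of_mem_of_notMem {M : Type*} [AddCommGroup M] (f : α → M)
    {I : Finset α} {a b : α} (ha : a ∈ I) (hb : b ∉ I) :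
    ∑ i ∈ insert b (I.erase a), f i = ∑ i ∈ I, f i - f a + f b := by
  rw [sum_insert fun h => hb (mem_of_mem_erase h), sum_erase_eq_sub ha, add_comm]

theorem insert_erase_mem_filter_powersetCard {s I : Finset α} {p : ℕ} {a b : α} (hab : a ≠ b)
    (hbs : b ∈ s) (hI : I ∈ (powersetCard p s).filter (fun I => a ∈ I ∧ b ∉ I)) :
    insert b (I.erase a) ∈ (powersetCard p s).filter (fun I => b ∈ I ∧ a ∉ I) := by
  obtain ⟨hIs, ha, hb⟩ := mem_filter.1 hI
  obtain ⟨hsub, hcard⟩ := mem_powersetCard.1 hIs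
  have hb' : b ∉ I.erase a := fun h => hb (mem_of_mem_erase h)
  refine mem_filter.2 ⟨mem_powersetCard.2 ⟨?_, ?_⟩, mem_insert_self _ _, ?_⟩
  · exact insert_subset hbs ((erase_subset a I).trans hsub)
  · rw [card_insert_of_notMem hb', card_erase_of_mem ha, hcard]
    have := card_pos.2 ⟨a, ha⟩
    omega
  · simp [hab]

theorem sum_filter_powersetCard_exchange {M : Type*} [AddCommMonoid M] (s : Finset α) (p : ℕ)
    {a b : α} (hab : a ≠ b) (has : a ∈ s) (hbs : b ∈ s) (g : Finset α → M) :
    ∑ I ∈ (powersetCard p s).filter (fun I => b ∈ I ∧ a ∉ I), g I =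
      ∑ I ∈ (powersetCard p s).filter (fun I => a ∈ I ∧ b ∉ I), g (insert b (I.erase a)) := by
  symm
  refine sum_nbij' (fun I => insert b (I.erase a)) (fun J => insert a (J.erase b))
    (fun I hI => insert_erase_mem_filter_powersetCard hab hbs hI)
    (fun J hJ => insert_erase_mem_filter_powersetCard hab.symm has hJ) ?_ ?_ fun _ _ => rfl
  · intro I hI
    obtain ⟨-, ha, hb⟩ := mem_filter.1 hI
    rw [erase_insert fun h => hb (mem_of_mem_erase h), insert_erase ha]
  · intro J hJ
    obtain ⟨-, hb, ha⟩ := mem_filter.1 hJ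
    rw [erase_insert fun h => ha (mem_of_mem_erase h), insert_erase hb]

theorem sum_filter_mem_le_sum_filter_mem {M : Type*} [AddCommMonoid M] [PartialOrder M]
    [IsOrderedAddMonoid M] (P : Finset (Finset α)) (a b : α) (g : Finset α → M)
    (h : ∑ I ∈ P.filter (fun I => a ∈ I ∧ b ∉ I), g I ≤
      ∑ I ∈ P.filter (fun I => b ∈ I ∧ a ∉ I), g I) :
    ∑ I ∈ P.filter (a ∈ ·), g I ≤ ∑ I ∈ P.filter (b ∈ ·), g I := by
  rw [← sum_filter_add_sum_filter_not (P.filter (a ∈ ·)) (b ∈ ·),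
    ← sum_filter_add_sum_filter_not (P.filter (b ∈ ·)) (a ∈ ·)]
  simp only [filter_filter]
  rw [filter_congr fun I _ => and_comm (a := b ∈ I)]
  exact add_le_add_right h _

end Exchange

theorem Fval_pos {n p : ℕ} {lam : Fin n → ℝ} (hP : Pcone n p lam) : 0 < Fval n p lam :=
  prod_pos hP

theorem Fkk_eq_sum_Fval_div {n p : ℕ} {lam : Fin n → ℝ} (hP : Pcone n p lam) (m : Fin n) :
    Fkk n p m lam =
      ∑ I ∈ (powersetCard p univ).filter (m ∈ ·), Fval n p lam / ∑ i ∈ I, lam i := by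
  refine sum_congr rfl fun I hI => ?_
  have hI := (mem_filter.1 hI).1
  rw [eq_div_iff (hP I hI).ne', mul_comm, Fval]
  exact mul_prod_erase _ (fun J => ∑ i ∈ J, lam i) hI

theorem Fkk_antitone_general (n p : ℕ)
    (lam : Fin n → ℝ) (hP : Pcone n p lam)
    (k r : Fin n) (h : lam r ≤ lam k) :
    Fkk n p k lam ≤ Fkk n p r lam := by
  rcases eq_or_ne k r with rfl | hkr
  · exact le_rfl
  rw [Fkk_eq_sum_Fval_div hP, Fkk_eq_sum_Fval_div hP]
  apply sum_filter_mem_le_sum_filter_mem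
  rw [sum_filter_powersetCard_exchange _ _ hkr (mem_univ k) (mem_univ r)]
  refine sum_le_sum fun I hI => ?_
  obtain ⟨-, hk, hr⟩ := mem_filter.1 hI
  have hexchange := (mem_filter.1 (insert_erase_mem_filter_powersetCard hkr (mem_univ r) hI)).1
  refine div_le_div_of_nonneg_left (Fval_pos hP).le (hP _ hexchange) ?_
  rw [sum_insert_erase_of_mem_of_notMem lam hk hr]
  linarith

/-- Monotonicity of the derivatives of `F` on `𝒫_p`: if `λ_k ≥ λ_r` then
`F^{kk}(λ) ≤ F^{rr}(λ)`. -/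
theorem Fkk_antitone (n p : ℕ) (hn : 1 ≤ n) (hp1 : 1 ≤ p) (hpn : p ≤ n)
    (lam : Fin n → ℝ) (hP : Pcone n p lam)
    (k r : Fin n) (h : lam r ≤ lam k) :
    Fkk n p k lam ≤ Fkk n p r lam :=
  Fkk_antitone_general n p lam hP k r h
end

section
/- (Lemma 2.4) Suppose 2 ≤ p ≤ n−1 and 2p ≥ n. For every f₀ > 0 there exists a constant C > 0, depending only on n, p and f₀, with the following property: if λ ∈ 𝒫_p satisfies λ₁ ≥ λ₂ ≥ ⋯ ≥ λₙ, λₙ ≥ −λ₁/(2(p−1)), and F(λ) ≥ f₀, then λ₁ ≤ C · Σ_{i=1}^n F^{ii}(λ). -/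
open Finset

/-!
Let `k` be the index of `λ₁ = max λ`, let `I` minimise `S_I` among the `p`-subsets and `i ∈ I`.
The `I`-term of `F^{ii}` is `∏_{J ≠ I} S_J = F / S_I`, so it suffices to bound this product below by
`c λ₁`. If `S_I λ₁ ≤ 1`, then `F / S_I ≥ f₀ λ₁`. Otherwise every factor is at least `S_I > 1/λ₁`,
and `λ₁ ≥ 1/p` because `S_I ≤ p λ₁`. The bound on `λₙ` makes `S_J ≥ λ₁/2` whenever `k ∈ J`, and as
`2p ≥ n` these sets are at least as many as those avoiding `k`: each factor `1/λ₁` is paired with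
a factor `λ₁/2`, and an unpaired factor `λ₁/2` remains.
-/

theorem Nat.choose_succ_le_choose {n k : ℕ} (h : n ≤ 2 * k + 1) :
    n.choose (k + 1) ≤ n.choose k := by
  refine Nat.le_of_mul_le_mul_right ?_ k.succ_pos
  rw [Nat.choose_succ_right_eq]
  exact Nat.mul_le_mul_left _ (by omega)

namespace Finset

variable {α : Type*} [DecidableEq α] {s : Finset α} {a : α}

theorem card_filter_mem_powersetCard_succ (ha : a ∈ s) (k : ℕ) :
    #{J ∈ s.powersetCard (k + 1) | a ∈ J} = (#s - 1).choose k := by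
  simpa using card_filter_powersetCard_subset {a} s (k + 1) (singleton_subset_iff.2 ha)

theorem filter_notMem_powersetCard (s : Finset α) (a : α) (k : ℕ) :
    {J ∈ s.powersetCard k | a ∉ J} = (s.erase a).powersetCard k := by
  ext J
  simp only [mem_filter, mem_powersetCard, subset_erase]
  tauto

theorem card_filter_notMem_powersetCard (ha : a ∈ s) (k : ℕ) :
    #{J ∈ s.powersetCard k | a ∉ J} = (#s - 1).choose k := by
  rw [filter_notMem_powersetCard, card_powersetCard, card_erase_of_mem ha]

theorem card_filter_notMem_powersetCard_le (ha : a ∈ s) {k : ℕ} (hk : 0 < k)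
    (hs : #s ≤ 2 * k) :
    #{J ∈ s.powersetCard k | a ∉ J} ≤ #{J ∈ s.powersetCard k | a ∈ J} := by
  obtain ⟨k, rfl⟩ := Nat.exists_eq_add_one.2 hk
  rw [card_filter_notMem_powersetCard ha, card_filter_mem_powersetCard_succ ha]
  exact Nat.choose_succ_le_choose (by omega)

end Finset

theorem Finset.pow_card_le_prod_of_nonneg {ι : Type*} {s : Finset ι} {f : ι → ℝ} {a : ℝ}
    (ha : 0 ≤ a) (h : ∀ i ∈ s, a ≤ f i) : a ^ #s ≤ ∏ i ∈ s, f i := by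
  simpa using Finset.prod_le_prod (fun _ _ => ha) h

theorem half_le_sum_of_mem {ι : Type*} [DecidableEq ι] {J : Finset ι} {lam : ι → ℝ} {k : ι}
    {μ : ℝ} (hk : k ∈ J) (hJ : 2 ≤ #J) (hμ : ∀ i ∈ J, μ ≤ lam i)
    (hlow : -lam k / (2 * ((#J : ℝ) - 1)) ≤ μ) : lam k / 2 ≤ ∑ i ∈ J, lam i := by
  have hJ' : (0 : ℝ) < (#J : ℝ) - 1 := by
    have : (2 : ℝ) ≤ #J := by exact_mod_cast hJ
    linarith
  have hrest : ((#J : ℝ) - 1) * μ ≤ ∑ i ∈ J.erase k, lam i := by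
    have := card_nsmul_le_sum (J.erase k) lam μ fun i hi => hμ i (mem_of_mem_erase hi)
    rwa [card_erase_of_mem hk, nsmul_eq_mul, Nat.cast_sub (by omega), Nat.cast_one] at this
  rw [div_le_iff₀ (by positivity)] at hlow
  rw [← add_sum_erase J lam hk]
  linarith

section MinimalFactor

variable {ι : Type*} [DecidableEq ι] {𝒮 : Finset ι} {S : ι → ℝ} {I : ι} {x y : ℝ}

theorem pow_card_mul_le_prod_erase_of_half_le (hI : I ∈ 𝒮) (hmin : ∀ J ∈ 𝒮, S I ≤ S J)
    (hhalf : x / 2 ≤ S I) (h𝒮 : (𝒮.erase I).Nonempty) (hy : 0 ≤ y) (hy2 : y ≤ 1 / 2)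
    (hyx : y ≤ x / 2) : y ^ #𝒮 * x ≤ ∏ J ∈ 𝒮.erase I, S J := by
  obtain ⟨e, he⟩ := Nat.exists_eq_add_one.2 h𝒮.card_pos
  have hx : 0 ≤ x := by linarith
  have hcard : #𝒮 = e + 2 := by rw [← card_erase_add_one hI, he]
  calc y ^ #𝒮 * x = y ^ e * (y * y * x) := by rw [hcard]; ring
    _ ≤ y ^ e * (1 / 2 * x) := by gcongr; nlinarith
    _ = y ^ e * (x / 2) := by ring
    _ ≤ (x / 2) ^ e * (x / 2) := by gcongr
    _ = (x / 2) ^ #(𝒮.erase I) := by rw [he, pow_succ]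
    _ ≤ ∏ J ∈ 𝒮.erase I, S J :=
      pow_card_le_prod_of_nonneg (by linarith) fun J hJ =>
        hhalf.trans (hmin J (mem_of_mem_erase hJ))

variable {A : ι → Prop} [DecidablePred A]

theorem pow_card_mul_le_prod_erase_of_one_le_mul (hI : I ∈ 𝒮) (hAI : ¬A I)
    (hmin : ∀ J ∈ 𝒮, S I ≤ S J) (hA : ∀ J ∈ 𝒮, A J → x / 2 ≤ S J) (hbig : 1 ≤ S I * x)
    (hcard : #{J ∈ 𝒮 | ¬A J} ≤ #{J ∈ 𝒮 | A J}) (hx : 0 < x) (hy : 0 ≤ y) (hy2 : y ≤ 1 / 2)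
    (hyx : y ≤ x / 2) : y ^ #𝒮 * x ≤ ∏ J ∈ 𝒮.erase I, S J := by
  have hIB : I ∈ {J ∈ 𝒮 | ¬A J} := mem_filter.2 ⟨hI, hAI⟩
  obtain ⟨b, hb⟩ := Nat.exists_eq_add_one.2 (card_pos.2 ⟨I, hIB⟩)
  obtain ⟨d, hd⟩ := Nat.exists_eq_add_of_le (hb ▸ hcard)
  have h𝒮 : #𝒮 = 2 * b + d + 2 := by
    rw [← card_filter_add_card_filter_not A, hb, hd]
    ring
  have hcardA : #{J ∈ 𝒮.erase I | A J} = b + 1 + d := by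
    rw [filter_erase, erase_eq_of_notMem (fun h => hAI (mem_filter.1 h).2), hd]
  have hcardB : #{J ∈ 𝒮.erase I | ¬A J} = b := by
    rw [filter_erase, card_erase_of_mem hIB, hb, Nat.add_sub_cancel]
  have hinv : x⁻¹ ≤ S I := by rwa [inv_eq_one_div, div_le_iff₀ hx]
  have hprodA : (x / 2) ^ (b + 1 + d) ≤ ∏ J ∈ 𝒮.erase I with A J, S J :=
    hcardA ▸ pow_card_le_prod_of_nonneg (by positivity) fun J hJ =>
      hA J (mem_of_mem_erase (mem_filter.1 hJ).1) (mem_filter.1 hJ).2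
  have hprodB : x⁻¹ ^ b ≤ ∏ J ∈ 𝒮.erase I with ¬A J, S J :=
    hcardB ▸ pow_card_le_prod_of_nonneg (by positivity) fun J hJ =>
      hinv.trans (hmin J (mem_of_mem_erase (mem_filter.1 hJ).1))
  have hhalf : x / 2 * x⁻¹ = 1 / 2 := by field_simp
  calc y ^ #𝒮 * x ≤ y ^ (b + d + 1) * x :=
        mul_le_mul_of_nonneg_right (pow_le_pow_of_le_one hy (by linarith) (by omega)) hx.le
    _ = y ^ b * y ^ d * (y * x) := by ring
    _ ≤ (1 / 2) ^ b * (x / 2) ^ d * (1 / 2 * x) := by gcongr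
    _ = (x / 2 * x⁻¹) ^ b * (x / 2) ^ d * (x / 2) := by rw [hhalf]; ring
    _ = (x / 2) ^ (b + 1 + d) * x⁻¹ ^ b := by ring
    _ ≤ ∏ J ∈ 𝒮.erase I, S J := by
      rw [← prod_filter_mul_prod_filter_not (𝒮.erase I) A]
      exact mul_le_mul hprodA hprodB (by positivity) ((pow_nonneg (by positivity) _).trans hprodA)

theorem pow_card_mul_le_prod_erase (hI : I ∈ 𝒮) (hmin : ∀ J ∈ 𝒮, S I ≤ S J)
    (hA : ∀ J ∈ 𝒮, A J → x / 2 ≤ S J) (hB : ∃ J ∈ 𝒮, ¬A J) (hbig : 1 ≤ S I * x)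
    (hcard : #{J ∈ 𝒮 | ¬A J} ≤ #{J ∈ 𝒮 | A J}) (hx : 0 < x) (hy : 0 ≤ y) (hy2 : y ≤ 1 / 2)
    (hyx : y ≤ x / 2) : y ^ #𝒮 * x ≤ ∏ J ∈ 𝒮.erase I, S J := by
  by_cases hAI : A I
  · obtain ⟨J, hJ, hAJ⟩ := hB
    exact pow_card_mul_le_prod_erase_of_half_le hI hmin (hA I hI hAI)
      ⟨J, mem_erase.2 ⟨fun h => hAJ (h ▸ hAI), hJ⟩⟩ hy hy2 hyx
  · exact pow_card_mul_le_prod_erase_of_one_le_mul hI hAI hmin hA hbig hcard hx hy hy2 hyx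

end MinimalFactor

section GardingCone

variable {n p : ℕ} {lam : Fin n → ℝ}

theorem prod_erase_le_sum_Fkk (hP : Pcone n p lam) {I : Finset (Fin n)}
    (hI : I ∈ powersetCard p univ) {k : Fin n} (hk : k ∈ I) :
    ∏ J ∈ (powersetCard p univ).erase I, ∑ i ∈ J, lam i ≤ ∑ i, Fkk n p i lam := by
  have hprod : ∀ I', 0 ≤ ∏ J ∈ (powersetCard p univ).erase I', ∑ i ∈ J, lam i := fun I' =>
    prod_nonneg fun J hJ => (hP J (mem_of_mem_erase hJ)).le
  calc ∏ J ∈ (powersetCard p univ).erase I, ∑ i ∈ J, lam i ≤ Fkk n p k lam :=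
        single_le_sum (fun I' _ => hprod I') (mem_filter.2 ⟨hI, hk⟩)
    _ ≤ ∑ i, Fkk n p i lam :=
        single_le_sum (f := fun i => Fkk n p i lam) (fun i _ => sum_nonneg fun I' _ => hprod I')
          (mem_univ k)

theorem min_mul_le_sum_Fkk (hP : Pcone n p lam) {k : Fin n} (hmax : ∀ i, lam i ≤ lam k)
    (hhalf : ∀ J ∈ powersetCard p univ, k ∈ J → lam k / 2 ≤ ∑ i ∈ J, lam i)
    (hp : 0 < p) (hpn : p < n) (h2p : n ≤ 2 * p) {f₀ : ℝ} (hf₀ : f₀ ≤ Fval n p lam) :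
    min f₀ ((1 / (2 * p)) ^ n.choose p) * lam k ≤ ∑ i, Fkk n p i lam := by
  set 𝒮 := powersetCard p (univ : Finset (Fin n))
  set S : Finset (Fin n) → ℝ := fun J => ∑ i ∈ J, lam i
  have hpR : (1 : ℝ) ≤ p := by exact_mod_cast hp
  have hle : ∀ J ∈ 𝒮, S J ≤ p * lam k := fun J hJ => by
    simpa [(mem_powersetCard.1 hJ).2] using sum_le_card_nsmul J lam (lam k) fun i _ => hmax i
  obtain ⟨I, hI, hmin⟩ := exists_min_image 𝒮 S (powersetCard_nonempty.2 (by simp; omega))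
  have hx : 0 < lam k := pos_of_mul_pos_right ((hP I hI).trans_le (hle I hI)) (by positivity)
  obtain ⟨i, hi⟩ : I.Nonempty := card_pos.1 ((mem_powersetCard.1 hI).2 ▸ hp)
  refine le_trans ?_ (prod_erase_le_sum_Fkk hP hI hi)
  have hprod : 0 ≤ ∏ J ∈ 𝒮.erase I, S J := prod_nonneg fun J hJ => (hP J (mem_of_mem_erase hJ)).le
  rcases le_or_gt (S I * lam k) 1 with hsmall | hbig
  · have hF : Fval n p lam = S I * ∏ J ∈ 𝒮.erase I, S J := (mul_prod_erase 𝒮 S hI).symm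
    calc min f₀ _ * lam k ≤ f₀ * lam k := by gcongr; exact min_le_left _ _
      _ ≤ (S I * ∏ J ∈ 𝒮.erase I, S J) * lam k := by gcongr; exact hf₀.trans_eq hF
      _ = (S I * lam k) * ∏ J ∈ 𝒮.erase I, S J := by ring
      _ ≤ ∏ J ∈ 𝒮.erase I, S J := mul_le_of_le_one_left hprod hsmall
  · have hy : 1 / (2 * p) ≤ lam k / 2 := by
      rw [div_le_div_iff₀ (by positivity) two_pos]
      nlinarith [hle I hI]
    have h𝒮 : #𝒮 = n.choose p := by simp [𝒮]
    obtain ⟨J, hJ⟩ : {J ∈ 𝒮 | k ∉ J}.Nonempty := by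
      rw [filter_notMem_powersetCard]
      exact powersetCard_nonempty.2 (by simp; omega)
    calc min f₀ _ * lam k ≤ (1 / (2 * p)) ^ #𝒮 * lam k := by
          rw [h𝒮]; gcongr; exact min_le_right _ _
      _ ≤ ∏ J ∈ 𝒮.erase I, S J :=
        pow_card_mul_le_prod_erase (A := (k ∈ ·)) hI hmin hhalf ⟨J, mem_filter.1 hJ⟩ hbig.le
          (card_filter_notMem_powersetCard_le (mem_univ k) hp (by simpa using h2p)) hx
          (by positivity) (by rw [div_le_div_iff₀ (by positivity) two_pos]; linarith) hy

end GardingCone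

/-- Lemma 2.4: for `2 ≤ p ≤ n−1` with `2p ≥ n` and every `f₀ > 0` there is `C > 0`
such that every ordered `λ ∈ 𝒫_p` with `λₙ ≥ −λ₁/(2(p−1))` and `F(λ) ≥ f₀`
satisfies `λ₁ ≤ C · Σ_i F^{ii}(λ)`. -/
theorem lemma24 (n p : ℕ) (hp2 : 2 ≤ p) (hpn : p ≤ n - 1) (h2p : n ≤ 2 * p) :
    ∀ f₀ : ℝ, 0 < f₀ → ∃ C : ℝ, 0 < C ∧
      ∀ lam : Fin n → ℝ, Pcone n p lam →
        (∀ i j : Fin n, i ≤ j → lam j ≤ lam i) →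
        -(lam ⟨0, by omega⟩) / (2 * ((p : ℝ) - 1)) ≤ lam ⟨n - 1, by omega⟩ →
        f₀ ≤ Fval n p lam →
        lam ⟨0, by omega⟩ ≤ C * ∑ i : Fin n, Fkk n p i lam := by
  intro f₀ hf₀
  have hc : 0 < min f₀ ((1 / (2 * p)) ^ n.choose p) := lt_min hf₀ (by positivity)
  refine ⟨(min f₀ ((1 / (2 * p)) ^ n.choose p))⁻¹, inv_pos.2 hc, fun lam hP hmono hlow hF => ?_⟩
  have hhalf : ∀ J ∈ powersetCard p univ, ⟨0, by omega⟩ ∈ J →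
      lam ⟨0, by omega⟩ / 2 ≤ ∑ i ∈ J, lam i := fun J hJ h0 => by
    rw [mem_powersetCard] at hJ
    exact half_le_sum_of_mem h0 (hJ.2 ▸ hp2)
      (fun i _ => hmono i ⟨n - 1, by omega⟩ (Nat.le_sub_one_of_lt i.isLt)) (by rwa [hJ.2])
  rw [le_inv_mul_iff₀ hc]
  exact min_mul_le_sum_Fkk hP (fun i => hmono _ i (Nat.zero_le _)) hhalf (by omega) (by omega)
    h2p hF
end

section
/- (Lemma 2.5) For every ε with 0 < ε < 1 there exists δ > 0, depending only on ε, with the following property: if λ ∈ 𝒫_p satisfies λ₁ ≥ λ₂ ≥ ⋯ ≥ λₙ and λₙ ≥ −δλ₁, then for every index i ∈ {2,…,n} with λ_i < λ₁ one has −2λ₁·(F^{11}(λ) − F^{ii}(λ))/(λ₁ − λ_i) + (1+ε)·F^{11}(λ) ≥ (1+ε)·F^{ii}(λ). (The quotient (F^{11} − F^{ii})/(λ₁ − λ_i) is the mixed second derivative F^{1i,i1}; the conclusion is the inequality −2F^{1i,i1} + (1+ε)F^{11}/λ₁ ≥ (1+ε)F^{ii}/λ₁ multiplied through by λ₁ >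 0.) -/
open Finset

/-!
On the Gårding cone every `S_I` is positive, so `F^{kk} = F · Σ_{I ∋ k} S_I⁻¹`. Transporting the
subsets containing `k` to those containing `j` by the transposition `(j k)` can only increase
each `S_I` when `λ_j ≤ λ_k`; hence `F^{kk} ≤ F^{jj}`, in particular `F^{11} ≤ F^{ii}`. The claim then
reduces to `(1 + ε)(λ₁ - λ_i) ≤ 2λ₁`, which holds for `δ = (1 - ε)/(1 + ε)` because
`λ_i ≥ λ_n ≥ -δλ₁`.
-/

section

variable {n p : ℕ}

lemma Fkk_eq_Fval_mul_sum_inv {lam : Fin n → ℝ} (hlam : Pcone n p lam) (k : Fin n) :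
    Fkk n p k lam = Fval n p lam *
      ∑ I ∈ (powersetCard p (univ : Finset (Fin n))).filter (fun I => k ∈ I),
        (∑ i ∈ I, lam i)⁻¹ := by
  rw [Fkk, mul_sum]
  refine sum_congr rfl fun I hI => ?_
  have hI : I ∈ powersetCard p univ := (mem_filter.1 hI).1
  rw [Fval, ← prod_erase_mul _ _ hI, mul_inv_cancel_right₀ (hlam I hI).ne']

lemma sum_le_sum_comp_swap {lam : Fin n → ℝ} {I : Finset (Fin n)} {j k : Fin n}
    (hj : j ∈ I) (hjk : lam j ≤ lam k) :
    ∑ i ∈ I, lam i ≤ ∑ i ∈ I, lam (Equiv.swap j k i) := by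
  by_cases hk : k ∈ I
  · refine (Equiv.Perm.sum_comp _ _ _ fun i hi => ?_).ge
    rcases Equiv.swap_apply_ne_self_iff.1 hi with ⟨-, rfl | rfl⟩
    exacts [hj, hk]
  · have hfix : ∀ i ∈ I.erase j, lam (Equiv.swap j k i) = lam i := fun i hi => by
      rw [Equiv.swap_apply_of_ne_of_ne (ne_of_mem_erase hi)
        (ne_of_mem_of_not_mem (mem_of_mem_erase hi) hk)]
    rw [← add_sum_erase I lam hj, ← add_sum_erase I _ hj, Equiv.swap_apply_left,
      sum_congr rfl hfix]
    gcongr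

lemma Fkk_le_Fkk_of_le {lam : Fin n → ℝ} (hlam : Pcone n p lam) {j k : Fin n}
    (hjk : lam j ≤ lam k) : Fkk n p k lam ≤ Fkk n p j lam := by
  rw [Fkk_eq_Fval_mul_sum_inv hlam, Fkk_eq_Fval_mul_sum_inv hlam]
  refine mul_le_mul_of_nonneg_left ?_ (prod_pos hlam).le
  set σ := Equiv.swap j k
  have hreindex := sum_equiv σ.finsetCongr
    (s := (powersetCard p (univ : Finset (Fin n))).filter (fun I => j ∈ I))
    (t := (powersetCard p (univ : Finset (Fin n))).filter (fun I => k ∈ I))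
    (f := fun I => (∑ i ∈ I, lam (σ i))⁻¹) (g := fun I => (∑ i ∈ I, lam i)⁻¹)
    (fun I => by simp [σ])
    (fun I _ => by simp [sum_map])
  rw [← hreindex]
  refine sum_le_sum fun I hI => ?_
  obtain ⟨hIC, hjI⟩ := mem_filter.1 hI
  exact inv_anti₀ (hlam I hIC) (sum_le_sum_comp_swap hjI hjk)

end

/-- Lemma 2.5: for every `0 < ε < 1` there is `δ = δ(ε) > 0` such that for every
ordered `λ ∈ 𝒫_p` with `λₙ ≥ −δλ₁` and every index `i ≥ 2` with `λ_i < λ₁`,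
`−2λ₁·(F^{11} − F^{ii})/(λ₁ − λ_i) + (1+ε)·F^{11} ≥ (1+ε)·F^{ii}`. -/
theorem lemma25 (n p : ℕ) (hn : 1 ≤ n) :
    ∀ ε : ℝ, 0 < ε → ε < 1 → ∃ δ : ℝ, 0 < δ ∧
      ∀ lam : Fin n → ℝ, Pcone n p lam →
        (∀ i j : Fin n, i ≤ j → lam j ≤ lam i) →
        -δ * lam ⟨0, hn⟩ ≤ lam ⟨n - 1, by omega⟩ →
        ∀ i : Fin n, 1 ≤ (i : ℕ) → lam i < lam ⟨0, hn⟩ →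
          (1 + ε) * Fkk n p i lam ≤
            -2 * lam ⟨0, hn⟩ *
                ((Fkk n p ⟨0, hn⟩ lam - Fkk n p i lam) / (lam ⟨0, hn⟩ - lam i)) +
              (1 + ε) * Fkk n p ⟨0, hn⟩ lam := by
  intro ε hε0 hε1
  refine ⟨(1 - ε) / (1 + ε), div_pos (by linarith) (by linarith), ?_⟩
  intro lam hlam hanti hlow i _ hlt
  set lam₁ := lam ⟨0, hn⟩
  have hlast : lam ⟨n - 1, by omega⟩ ≤ lam i := hanti _ _ (Fin.mk_le_mk.2 (by omega))
  have hgap : 0 < lam₁ - lam i := sub_pos.2 hlt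
  have hcoef : 1 + ε ≤ 2 * lam₁ / (lam₁ - lam i) := by
    rw [le_div_iff₀ hgap]
    calc (1 + ε) * (lam₁ - lam i) ≤ (1 + ε) * (lam₁ + (1 - ε) / (1 + ε) * lam₁) := by
          gcongr; linarith
      _ = 2 * lam₁ := by field_simp; ring
  have hF : Fkk n p ⟨0, hn⟩ lam ≤ Fkk n p i lam := Fkk_le_Fkk_of_le hlam hlt.le
  have hscaled := mul_le_mul_of_nonneg_right hcoef (sub_nonneg.2 hF)
  have hrw : -2 * lam₁ * ((Fkk n p ⟨0, hn⟩ lam - Fkk n p i lam) / (lam₁ - lam i)) =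
      2 * lam₁ / (lam₁ - lam i) * (Fkk n p i lam - Fkk n p ⟨0, hn⟩ lam) := by ring
  rw [hrw]
  linarith
end
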